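/- arXiv:1608.01234 — 2 statements merged into one kernel-verified Lean document; each statement's English description precedes it below -/
import Mathlib

section
/- For nonnegative reals d and ε with 0 ≤ ε ≤ 0.65, one has (1 + d·ε)/sqrt(1 + d² − 2dε) ≤ 2 and d/sqrt(1 + d² − 2dε) ≤ 2. -/
theorem incoherence_ratio_bounds (d ε : ℝ) (hd : 0 ≤ d) (hε0 : 0 ≤ ε)
    (hε : ε ≤ 0.65) :
    (1 + d * ε) / Real.sqrt (1 + d ^ 2 - 2 * d * ε) ≤ 2 ∧
    d / Real.sqrt (1 + d ^ 2 - 2 * d * ε) ≤ 2 := by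
  have hQ : (0:ℝ) < 1 + d ^ 2 - 2 * d * ε := by
    nlinarith [sq_nonneg (d - 0.65), mul_nonneg hd (sub_nonneg.2 hε)]
  have hs : 0 < Real.sqrt (1 + d ^ 2 - 2 * d * ε) := Real.sqrt_pos.2 hQ
  have hsq : Real.sqrt (1 + d ^ 2 - 2 * d * ε) ^ 2 = 1 + d ^ 2 - 2 * d * ε :=
    Real.sq_sqrt hQ.le
  have h1 : ε ^ 2 ≤ 0.4225 := by nlinarith
  have h2 : (0:ℝ) < 4 - ε ^ 2 := by nlinarith
  have key : (1 + d * ε) ^ 2 ≤ 4 * (1 + d ^ 2 - 2 * d * ε) := by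
    nlinarith [sq_nonneg (d * (4 - ε ^ 2) - 5 * ε), mul_pos h2 h2, sq_nonneg d,
      mul_nonneg (sq_nonneg d) (sub_nonneg.2 h1)]
  constructor
  · rw [div_le_iff₀ hs]
    nlinarith [hsq, hs, key, mul_nonneg hd hε0,
      sq_nonneg (2 * Real.sqrt (1 + d ^ 2 - 2 * d * ε) - (1 + d * ε))]
  · rw [div_le_iff₀ hs]
    nlinarith [hsq, hs, sq_nonneg (2 * Real.sqrt (1 + d ^ 2 - 2 * d * ε) - d),
      sq_nonneg (3 * d - 4 * ε), mul_nonneg hd hε0, sq_nonneg ε]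
end

section
/- Let K ⊆ ℝⁿ be a closed star-shaped set (i.e., cK ⊆ K for all 0 ≤ c ≤ 1). Then for any u ∈ K, a ∈ ℝⁿ, and t > 0: ‖P_K(a) − u‖₂ ≤ max(t, (2/t)·‖a − u‖_{K_t°}), where P_K(a) is any Euclidean metric projection of a onto K, K_t = (K−K) ∩ tB₂ⁿ, and ‖x‖_{K_t°} = sup_{v∈K_t}⟨x,v⟩. -/
/-! If `p` is a nearest point of `K` to `a`, then `⟪a - u, p - u⟫ ≥ ‖p - u‖² / 2` for every
`u ∈ K`. When `‖p - u‖ > t`, star-shapedness lets us shrink both `p` and `u`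
by the factor `t / ‖p - u‖`, producing a vector `t / ‖p - u‖ • (p - u)` of `K_t` whose pairing
with `a - u` is at least `t ‖p - u‖ / 2`; so the polar norm controls `‖p - u‖`. -/

open RealInnerProductSpace

/-- The polar seminorm of `x` with respect to `Q_t = (K - K) ∩ t·B₂ⁿ`. -/
noncomputable def polarNorm {n : ℕ} (K : Set (EuclideanSpace ℝ (Fin n))) (t : ℝ)
    (x : EuclideanSpace ℝ (Fin n)) : ℝ :=
  sSup ((fun v => ⟪x, v⟫) ''
    {v | (∃ k₁ ∈ K, ∃ k₂ ∈ K, v = k₁ - k₂) ∧ ‖v‖ ≤ t})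

theorem norm_sub_sq_le_two_inner_of_norm_sub_le {E : Type*} [NormedAddCommGroup E]
    [InnerProductSpace ℝ E] {a p u : E} (h : ‖a - p‖ ≤ ‖a - u‖) :
    ‖p - u‖ ^ 2 ≤ 2 * ⟪a - u, p - u⟫ := by
  have hexpand : ‖a - p‖ ^ 2 = ‖a - u‖ ^ 2 - 2 * ⟪a - u, p - u⟫ + ‖p - u‖ ^ 2 := by
    rw [← norm_sub_sq_real, sub_sub_sub_cancel_right]
  have hsq : ‖a - p‖ ^ 2 ≤ ‖a - u‖ ^ 2 := pow_le_pow_left₀ (norm_nonneg _) h 2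
  linarith

theorem inner_sub_le_polarNorm {n : ℕ} {K : Set (EuclideanSpace ℝ (Fin n))} {t : ℝ}
    (x : EuclideanSpace ℝ (Fin n)) {k₁ k₂ : EuclideanSpace ℝ (Fin n)} (hk₁ : k₁ ∈ K)
    (hk₂ : k₂ ∈ K) (hnorm : ‖k₁ - k₂‖ ≤ t) :
    ⟪x, k₁ - k₂⟫ ≤ polarNorm K t x := by
  refine le_csSup ⟨‖x‖ * t, ?_⟩ ⟨k₁ - k₂, ⟨⟨k₁, hk₁, k₂, hk₂, rfl⟩, hnorm⟩, rfl⟩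
  rintro _ ⟨v, ⟨-, hv⟩, rfl⟩
  exact (real_inner_le_norm x v).trans (mul_le_mul_of_nonneg_left hv (norm_nonneg x))

theorem projection_error_bound_general {n : ℕ} (K : Set (EuclideanSpace ℝ (Fin n)))
    (hstar : ∀ c : ℝ, 0 ≤ c → c ≤ 1 → ∀ x ∈ K, c • x ∈ K)
    (u : EuclideanSpace ℝ (Fin n)) (hu : u ∈ K)
    (a : EuclideanSpace ℝ (Fin n)) (t : ℝ) (ht : 0 < t)
    (p : EuclideanSpace ℝ (Fin n)) (hpK : p ∈ K)
    (hproj : ∀ k ∈ K, ‖a - p‖ ≤ ‖a - k‖) :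
    ‖p - u‖ ≤ max t (2 / t * polarNorm K t (a - u)) := by
  rcases le_or_gt ‖p - u‖ t with hle | hlt
  · exact le_max_of_le_left hle
  refine le_max_of_le_right ?_
  set d := ‖p - u‖
  have hd : 0 < d := ht.trans hlt
  set c := t / d
  have hc0 : 0 ≤ c := by positivity
  have hc1 : c ≤ 1 := (div_le_one hd).2 hlt.le
  have hcd : c * d = t := div_mul_cancel₀ t hd.ne'
  have hshrunk : c • p - c • u = c • (p - u) := (smul_sub c p u).symm
  have hnorm : ‖c • (p - u)‖ = t := by
    rw [norm_smul, Real.norm_of_nonneg hc0, hcd]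
  have hpolar : ⟪a - u, c • (p - u)⟫ ≤ polarNorm K t (a - u) := by
    rw [← hshrunk]
    exact inner_sub_le_polarNorm (a - u) (hstar c hc0 hc1 p hpK) (hstar c hc0 hc1 u hu)
      (hshrunk ▸ hnorm.le)
  rw [real_inner_smul_right] at hpolar
  have hinner := norm_sub_sq_le_two_inner_of_norm_sub_le (hproj u hu)
  rw [div_mul_eq_mul_div, le_div_iff₀ ht]
  calc d * t = c * d ^ 2 := by rw [← hcd]; ring
    _ ≤ c * (2 * ⟪a - u, p - u⟫) := by gcongr
    _ ≤ 2 * polarNorm K t (a - u) := by linarith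

theorem projection_error_bound {n : ℕ} (K : Set (EuclideanSpace ℝ (Fin n)))
    (hclosed : IsClosed K)
    (hstar : ∀ c : ℝ, 0 ≤ c → c ≤ 1 → ∀ x ∈ K, c • x ∈ K)
    (u : EuclideanSpace ℝ (Fin n)) (hu : u ∈ K)
    (a : EuclideanSpace ℝ (Fin n)) (t : ℝ) (ht : 0 < t)
    (p : EuclideanSpace ℝ (Fin n)) (hpK : p ∈ K)
    (hproj : ∀ k ∈ K, ‖a - p‖ ≤ ‖a - k‖) :
    ‖p - u‖ ≤ max t (2 / t * polarNorm K t (a - u)) :=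
  projection_error_bound_general K hstar u hu a t ht p hpK hproj
end
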